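/- Assume a nested system of fundamental sequences on Γ, and define the norm |α| = min{n > 1 : Γ ⇒_n α}. If β < δ ≤ Γ, then β ≤ δ[|β|]. -/

import Mathlib

open Ordinal

/-- A system of fundamental sequences on `Γ`: to each ordinal `α ≤ Γ` we associate a
non-decreasing sequence `fs α n` with `sup {fs α n + 1 : n} = α` for `α ≠ 0`, and `fs 0 n = 0`. -/
structure FSSystem (Γ : Ordinal) where
  fs : Ordinal → ℕ → Ordinal
  fs_zero : ∀ n, fs 0 n = 0
  mono : ∀ α, α ≤ Γ → Monotone (fs α)
  sup_eq : ∀ α, α ≤ Γ → α ≠ 0 → (⨆ n : ℕ, fs α n + 1) = α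

/-- The system is nested: it is never the case, for `γ < β ≤ Γ` and `n > 1`,
that `γ > β[n] > γ[n]`. -/
def FSSystem.Nested {Γ : Ordinal} (S : FSSystem Γ) : Prop :=
  ∀ γ β (n : ℕ), γ < β → β ≤ Γ → 1 < n → ¬ (S.fs γ n < S.fs β n ∧ S.fs β n < γ)

/-- Iterated evaluation `α[s_0][s_1]…[s_{m-1}]` along a list. -/
def FSSystem.evalL {Γ : Ordinal} (S : FSSystem Γ) (α : Ordinal) (s : List ℕ) : Ordinal :=
  s.foldl S.fs α

/-- `α ⇒_n β`: `β` is obtained from `α` by finitely many applications of `δ ↦ δ[n]`. -/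
def FSSystem.Reaches {Γ : Ordinal} (S : FSSystem Γ) (n : ℕ) (α β : Ordinal) : Prop :=
  ∃ k : ℕ, (fun δ => S.fs δ n)^[k] α = β

/-- The norm `|α| = min {n > 1 : Γ ⇒_n α}`. -/
noncomputable def FSSystem.norm {Γ : Ordinal} (S : FSSystem Γ) (α : Ordinal) : ℕ :=
  sInf {n : ℕ | 1 < n ∧ S.Reaches n Γ α}

namespace FSSystem

variable {Γ : Ordinal} (S : FSSystem Γ)

lemma fs_lt {α : Ordinal} (hα : α ≤ Γ) (h0 : α ≠ 0) (n : ℕ) : S.fs α n < α := by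
  rw [← Order.add_one_le_iff]
  conv_rhs => rw [← S.sup_eq α hα h0]
  exact Ordinal.le_iSup (fun n => S.fs α n + 1) n

lemma fs_le {α : Ordinal} (hα : α ≤ Γ) (n : ℕ) : S.fs α n ≤ α := by
  rcases eq_or_ne α 0 with rfl | h0
  · rw [S.fs_zero]
  · exact (S.fs_lt hα h0 n).le

lemma exists_le_fs_of_lt {α x : Ordinal} (hα : α ≤ Γ) (hx : x < α) (m : ℕ) :
    ∃ n, m ≤ n ∧ x ≤ S.fs α n := by
  rw [← S.sup_eq α hα hx.ne_bot, Ordinal.lt_iSup_iff] at hx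
  obtain ⟨n, hn⟩ := hx
  exact ⟨max m n, le_max_left m n,
    (Order.lt_add_one_iff.1 hn).trans (S.mono α hα (le_max_right m n))⟩

/-- The obstructions to reaching `x` along `δ ↦ δ[n]`. -/
def jumpers (x : Ordinal) (n : ℕ) : Set Ordinal :=
  {γ | x < γ ∧ γ ≤ Γ ∧ S.fs γ n < x}

lemma jumpers_antitone {x : Ordinal} {m n : ℕ} (hmn : m ≤ n) : S.jumpers x n ⊆ S.jumpers x m :=
  fun _ ⟨hxγ, hγ, hlt⟩ => ⟨hxγ, hγ, (S.mono _ hγ hmn).trans_lt hlt⟩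

lemma reaches_of_jumpers_eq_empty {x α : Ordinal} {n : ℕ} (h : S.jumpers x n = ∅)
    (hxα : x ≤ α) (hα : α ≤ Γ) : S.Reaches n α x := by
  induction α using WellFoundedLT.induction with
  | _ α ih =>
    rcases hxα.eq_or_lt with rfl | hxα
    · exact ⟨0, rfl⟩
    · have hlt := S.fs_lt hα hxα.ne_bot n
      have hx : x ≤ S.fs α n := le_of_not_gt fun h' => h.subset ⟨hxα, hα, h'⟩
      obtain ⟨k, hk⟩ := ih _ hlt hx (hlt.le.trans hα)
      exact ⟨k + 1, by rwa [Function.iterate_succ_apply]⟩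

variable {S}

lemma Reaches.le {n : ℕ} {α β : Ordinal} (h : S.Reaches n α β) (hα : α ≤ Γ) : β ≤ α := by
  obtain ⟨k, rfl⟩ := h
  induction k generalizing α with
  | zero => exact le_rfl
  | succ k ih =>
    rw [Function.iterate_succ_apply]
    exact (ih ((S.fs_le hα n).trans hα)).trans (S.fs_le hα n)

lemma Nested.fs_le_fs_of_fs_lt (hN : S.Nested) {γ β : Ordinal} {n : ℕ} (hγβ : γ < β)
    (hβ : β ≤ Γ) (hn : 1 < n) (h : S.fs β n < γ) : S.fs β n ≤ S.fs γ n :=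
  le_of_not_gt fun h' => hN γ β n hγβ hβ hn ⟨h', h⟩

lemma Nested.le_fs_of_fs_lt_fs (hN : S.Nested) {γ β : Ordinal} {n : ℕ} (hγβ : γ < β)
    (hβ : β ≤ Γ) (hn : 1 < n) (h : S.fs γ n < S.fs β n) : γ ≤ S.fs β n :=
  le_of_not_gt fun h' => hN γ β n hγβ hβ hn ⟨h, h'⟩

lemma Nested.le_fs_of_mem_jumpers (hN : S.Nested) {x γ u : Ordinal} {n₀ N : ℕ}
    (hγ : γ ∈ S.jumpers x N) (hγu : γ ≤ u) (hu : u ≤ Γ) (hn₀ : 1 < n₀) (hn₀N : n₀ ≤ N)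
    (hx : x ≤ S.fs u n₀) : γ ≤ S.fs u n₀ := by
  obtain ⟨-, hγΓ, hγx⟩ := hγ
  have hγ_fs : S.fs γ n₀ < S.fs u n₀ := ((S.mono γ hγΓ hn₀N).trans_lt hγx).trans_le hx
  refine hN.le_fs_of_fs_lt_fs (hγu.lt_of_ne ?_) hu hn₀ hγ_fs
  rintro rfl
  exact (hx.trans (S.mono γ hu hn₀N)).not_gt hγx

/-- The least jumpers `j i` at the indices `i + 2` increase with `i`. If they all existed, their
supremum `u` would satisfy `x ≤ u[n₀]` for some `n₀ > 1`, and nestedness would bound every `j i`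
by `u[n₀] < u`. -/
lemma Nested.exists_jumpers_eq_empty (hN : S.Nested) (x : Ordinal) :
    ∃ n, 1 < n ∧ S.jumpers x n = ∅ := by
  by_contra! hne
  set j : ℕ → Ordinal := fun i => sInf (S.jumpers x (i + 2))
  have hj : ∀ i, j i ∈ S.jumpers x (i + 2) := fun i =>
    csInf_mem (hne (i + 2) (by omega))
  have hj_mono : Monotone j := monotone_nat_of_le_succ fun i =>
    csInf_le' (S.jumpers_antitone (Nat.le_succ _) (hj (i + 1)))
  set u := ⨆ i, j i
  have hju : ∀ i, j i ≤ u := Ordinal.le_iSup j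
  have hu : u ≤ Γ := Ordinal.iSup_le fun i => (hj i).2.1
  have hxu : x < u := (hj 0).1.trans_le (hju 0)
  obtain ⟨n₀, hn₀, hx⟩ := S.exists_le_fs_of_lt hu hxu 2
  have hu_le : u ≤ S.fs u n₀ := Ordinal.iSup_le fun i =>
    (hj_mono (Nat.le_add_right i n₀)).trans
      (hN.le_fs_of_mem_jumpers (hj _) (hju _) hu hn₀ (by omega) hx)
  exact (S.fs_lt hu hxu.ne_bot n₀).not_ge hu_le

lemma Nested.exists_reaches (hN : S.Nested) {x : Ordinal} (hx : x ≤ Γ) :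
    ∃ n, 1 < n ∧ S.Reaches n Γ x := by
  obtain ⟨n, hn, hempty⟩ := hN.exists_jumpers_eq_empty x
  exact ⟨n, hn, S.reaches_of_jumpers_eq_empty hempty hx le_rfl⟩

/-- Along the descent `α ⇒_n β` from some `α ≥ δ`, the last step crossing `δ` goes from some
`α' ≥ δ` to `α'[n] < δ`; nestedness gives `α'[n] ≤ δ[n]`. -/
lemma Nested.le_fs_of_reaches (hN : S.Nested) {n : ℕ} (hn : 1 < n) {α β δ : Ordinal}
    (h : S.Reaches n α β) (hβδ : β < δ) (hδα : δ ≤ α) (hα : α ≤ Γ) : β ≤ S.fs δ n := by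
  obtain ⟨k, hk⟩ := h
  induction k generalizing α with
  | zero => exact absurd (hk ▸ hδα) hβδ.not_ge
  | succ k ih =>
    rw [Function.iterate_succ_apply] at hk
    have hαn : S.fs α n ≤ Γ := (S.fs_le hα n).trans hα
    by_cases hδ : δ ≤ S.fs α n
    · exact ih hδ hαn hk
    · have hβ : β ≤ S.fs α n := Reaches.le ⟨k, hk⟩ hαn
      rcases hδα.eq_or_lt with rfl | hδα
      · exact hβ
      · exact hβ.trans (hN.fs_le_fs_of_fs_lt hδα hα hn (not_le.1 hδ))

end FSSystem

/-- Goodness of the norm: in a nested system, if `β < δ ≤ Γ` then `β ≤ δ[|β|]`. -/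
theorem nested_good_norm {Γ : Ordinal} (S : FSSystem Γ) (hN : S.Nested)
    (β δ : Ordinal) (h : β < δ) (hδ : δ ≤ Γ) :
    β ≤ S.fs δ (S.norm β) := by
  obtain ⟨n, hn⟩ := hN.exists_reaches (h.le.trans hδ)
  obtain ⟨hnorm, hreach⟩ : 1 < S.norm β ∧ S.Reaches (S.norm β) Γ β :=
    Nat.sInf_mem (s := {n | 1 < n ∧ S.Reaches n Γ β}) ⟨n, hn⟩
  exact hN.le_fs_of_reaches hnorm hreach h hδ le_rfl
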